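/- arXiv:2411.18637 — 4 statements merged into one kernel-verified Lean document; each statement's English description precedes it below -/
import Mathlib

section
/- Let r ≥ 2, Q < 1/r and suppose F is a graph family with the property that for all large m, the graph U(T_k, m) + T_{m(r-1), r-1} is F-free for some tree T_k of order k, but the number of edges in any F-free n-vertex graph is at most e(T_{n,r}) + Qn. Then k ≤ ⌊1/(1-Qr)⌋. -/
/-! For `m = N k`, the graph `U(T, m) + T_{m(r-1), r-1}` is `T_{mr, r}` with the `N` copies of `T`
placed inside one part, so it has `e(T_{mr, r}) + N (k - 1)` edges. The extremal bound then gives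
`N (k - 1) ≤ Q N k r`, i.e. `k (1 - Q r) ≤ 1`. -/

open SimpleGraph Finset
open scoped Classical

/-- The join `G + H` of two graphs: all edges between the two vertex sets are added. -/
def SimpleGraph.join {α β : Type*} (G : SimpleGraph α) (H : SimpleGraph β) :
    SimpleGraph (α ⊕ β) where
  Adj x y := match x, y with
    | Sum.inl a, Sum.inl b => G.Adj a b
    | Sum.inr a, Sum.inr b => H.Adj a b
    | Sum.inl _, Sum.inr _ => True
    | Sum.inr _, Sum.inl _ => True
  symm := ⟨by rintro (a | a) (b | b) h <;> first | exact h.symm | trivial⟩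
  loopless := ⟨by rintro (a | a) h; exacts [G.loopless.irrefl a h, H.loopless.irrefl a h]⟩

/-- `U(T, m)`: the graph on `m` vertices consisting of as many disjoint copies of the
`k`-vertex graph `T` as possible, together with isolated vertices on the remainder. -/
def treePack {k : ℕ} (T : SimpleGraph (Fin k)) (hk : 0 < k) (m : ℕ) :
    SimpleGraph (Fin m) where
  Adj i j := (i : ℕ) / k = (j : ℕ) / k ∧ (i : ℕ) / k < m / k ∧
    T.Adj ⟨(i : ℕ) % k, Nat.mod_lt _ hk⟩ ⟨(j : ℕ) % k, Nat.mod_lt _ hk⟩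
  symm := ⟨by rintro i j ⟨h1, h2, h3⟩; exact ⟨h1.symm, h1 ▸ h2, h3.symm⟩⟩
  loopless := ⟨by rintro i ⟨-, -, h⟩; exact T.loopless.irrefl _ h⟩

namespace SimpleGraph

section Join

variable {α β : Type*} [Fintype α] [Fintype β] (G : SimpleGraph α) (H : SimpleGraph β)
  [DecidableRel (G.join H).Adj]

lemma degree_join_inl [DecidableRel G.Adj] (a : α) :
    (G.join H).degree (.inl a) = G.degree a + Fintype.card β := by
  have : (G.join H).neighborFinset (.inl a) = (G.neighborFinset a).disjSum univ := by
    ext (x | x) <;> rw [mem_neighborFinset] <;> simp [join]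
  rw [← card_neighborFinset_eq_degree, this, card_disjSum, card_neighborFinset_eq_degree,
    card_univ]

lemma degree_join_inr [DecidableRel H.Adj] (b : β) :
    (G.join H).degree (.inr b) = H.degree b + Fintype.card α := by
  have : (G.join H).neighborFinset (.inr b) = univ.disjSum (H.neighborFinset b) := by
    ext (x | x) <;> rw [mem_neighborFinset] <;> simp [join]
  rw [← card_neighborFinset_eq_degree, this, card_disjSum, card_neighborFinset_eq_degree,
    card_univ, add_comm]

lemma card_edgeFinset_join [DecidableRel G.Adj] [DecidableRel H.Adj] :
    #(G.join H).edgeFinset =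
      #G.edgeFinset + #H.edgeFinset + Fintype.card α * Fintype.card β := by
  have := (G.join H).sum_degrees_eq_twice_card_edges
  simp only [Fintype.sum_sum_type, degree_join_inl, degree_join_inr, sum_add_distrib,
    G.sum_degrees_eq_twice_card_edges, H.sum_degrees_eq_twice_card_edges, sum_const, card_univ,
    smul_eq_mul] at this
  linarith

end Join

lemma two_mul_card_edgeFinset_turanGraph_mul (m r : ℕ) :
    2 * #(turanGraph (m * r) r).edgeFinset = m ^ 2 * r * (r - 1) := by
  rw [card_edgeFinset_turanGraph, Nat.mul_mod_left, zero_pow two_ne_zero, Nat.sub_zero,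
    Nat.choose_zero_succ, add_zero]
  rcases r.eq_zero_or_pos with rfl | hr
  · simp
  obtain ⟨c, hc⟩ := (Nat.even_mul_pred_self r).two_dvd
  have : (m * r) ^ 2 * (r - 1) = 2 * r * (m ^ 2 * c) := by
    rw [mul_pow, mul_assoc, sq r, mul_assoc r, hc]; ring
  rw [this, Nat.mul_div_cancel_left _ (by positivity), mul_assoc, hc]
  ring

lemma card_edgeFinset_bot_boxProd {α β : Type*} [Fintype α] [DecidableEq α] [Fintype β]
    [DecidableEq β] (H : SimpleGraph β) [DecidableRel H.Adj] :
    #((⊥ : SimpleGraph α).boxProd H).edgeFinset = Fintype.card α * #H.edgeFinset := by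
  have := ((⊥ : SimpleGraph α).boxProd H).sum_degrees_eq_twice_card_edges
  simp only [degree_boxProd, bot_degree, zero_add, Fintype.sum_prod_type, sum_const, card_univ,
    smul_eq_mul, H.sum_degrees_eq_twice_card_edges] at this
  linarith

def bot_boxProd_iso_treePack {k : ℕ} (T : SimpleGraph (Fin k)) (hk : 0 < k) (N : ℕ) :
    (⊥ : SimpleGraph (Fin N)).boxProd T ≃g treePack T hk (N * k) where
  toEquiv := finProdFinEquiv
  map_rel_iff' := by
    rintro ⟨q, t⟩ ⟨q', t'⟩
    have hdiv (s : Fin k) (p : Fin N) : ((s : ℕ) + k * p) / k = p := by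
      rw [Nat.add_mul_div_left _ _ hk, Nat.div_eq_of_lt s.isLt, zero_add]
    simp [treePack, boxProd_adj, hdiv, Nat.mul_div_cancel _ hk, Nat.mod_eq_of_lt, Fin.val_inj,
      and_comm]

lemma card_edgeFinset_treePack_mul {k : ℕ} (T : SimpleGraph (Fin k)) [DecidableRel T.Adj]
    (hk : 0 < k) (N : ℕ) : #(treePack T hk (N * k)).edgeFinset = N * #T.edgeFinset := by
  rw [← (bot_boxProd_iso_treePack T hk N).card_edgeFinset_eq, card_edgeFinset_bot_boxProd,
    Fintype.card_fin]

lemma card_edgeFinset_join_turanGraph {m r : ℕ} (hr : 0 < r) (G : SimpleGraph (Fin m))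
    [DecidableRel G.Adj] :
    #(G.join (turanGraph (m * (r - 1)) (r - 1))).edgeFinset =
      #(turanGraph (m * r) r).edgeFinset + #G.edgeFinset := by
  obtain ⟨s, rfl⟩ := Nat.exists_eq_add_one_of_ne_zero hr.ne'
  have hsmall := two_mul_card_edgeFinset_turanGraph_mul m s
  have hbig := two_mul_card_edgeFinset_turanGraph_mul m (s + 1)
  rw [Nat.add_sub_cancel] at hbig ⊢
  rw [card_edgeFinset_join, Fintype.card_fin, Fintype.card_fin]
  apply Nat.eq_of_mul_eq_mul_left two_pos
  have hs : s * (s - 1) + 2 * s = (s + 1) * s := by rcases s with _ | s <;> simp; ring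
  simp only [mul_add, hsmall, hbig]
  linear_combination m ^ 2 * hs

end SimpleGraph

lemma le_floor_one_div_one_sub {k : ℕ} {a : ℝ} (ha : a < 1) (h : (k : ℝ) - 1 ≤ a * k) :
    k ≤ ⌊1 / (1 - a)⌋₊ := by
  apply Nat.le_floor
  rw [le_div_iff₀ (by linarith)]
  linarith

/-- Let `r ≥ 2`, `Q < 1/r` and suppose `F` is a graph family (encoded by its
isomorphism-invariant freeness predicate `Free`) such that for some tree `T` of order `k`, for
all large `m` the graph `U(T,m) + T_{m(r-1),r-1}` is `F`-free, while every `F`-free graph on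
`n` vertices has at most `e(T_{n,r}) + Q n` edges.  Then `k ≤ ⌊1/(1 - Q r)⌋`. -/
theorem stmt1 {k r : ℕ} (hr : 2 ≤ r) (hk : 0 < k) (Q : ℝ) (hQ : Q < 1 / r)
    (Free : ∀ {V : Type} [Fintype V], SimpleGraph V → Prop)
    (hiso : ∀ {V W : Type} [Fintype V] [Fintype W] (G : SimpleGraph V) (H : SimpleGraph W),
      Nonempty (G ≃g H) → (Free G ↔ Free H))
    (T : SimpleGraph (Fin k)) (hT : T.IsTree)
    (hfree : ∃ M : ℕ, ∀ m ≥ M,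
      Free ((treePack T hk m).join (turanGraph (m * (r - 1)) (r - 1))))
    (hex : ∀ (n : ℕ) (G : SimpleGraph (Fin n)), Free G →
      (G.edgeFinset.card : ℝ) ≤ ((turanGraph n r).edgeFinset.card : ℝ) + Q * n) :
    k ≤ Nat.floor (1 / (1 - Q * r)) := by
  obtain ⟨M, hM⟩ := hfree
  set N := max M 1
  have hN : (0 : ℝ) < N := by positivity
  have hJ := hM (N * k) ((le_max_left M 1).trans (Nat.le_mul_of_pos_right N hk))
  let e : Fin (N * k) ⊕ Fin (N * k * (r - 1)) ≃ Fin (N * k * r) := finSumFinEquiv.trans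
    (finCongr (by rw [add_comm, ← Nat.mul_add_one, Nat.sub_add_cancel (by omega)]))
  have hbound := hex _ _ ((hiso _ _ ⟨Iso.map e _⟩).mp hJ)
  simp only [← (Iso.map e _).card_edgeFinset_eq] at hbound
  rw [card_edgeFinset_join_turanGraph (by omega), card_edgeFinset_treePack_mul] at hbound
  push_cast at hbound
  have hTbound : (#T.edgeFinset : ℝ) ≤ Q * r * k :=
    le_of_mul_le_mul_left (by linarith) hN
  have hTe : (#T.edgeFinset : ℝ) + 1 = k := by exact_mod_cast (by simpa using hT.card_edgeFinset)
  refine le_floor_one_div_one_sub (by rwa [lt_div_iff₀ (by positivity)] at hQ) ?_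
  linarith
end

section
/- Among all trees on k ≥ 2 vertices, the star K_{1,k-1} maximizes and the path P_k minimizes the number of walks of length two (equivalently, the sum of squares of the vertex degrees). -/
open SimpleGraph Finset
open scoped Classical

lemma aux_exists_adj {V : Type*} {G : SimpleGraph V} (hG : G.Connected)
    [Fintype V] (h : 1 < Fintype.card V) (v : V) : ∃ w, G.Adj v w := by
  obtain ⟨w, hw⟩ := Fintype.exists_ne_of_one_lt_card h v
  obtain ⟨p⟩ := hG.preconnected v w
  cases p with
  | nil => exact absurd rfl hw.symm
  | cons h _ => exact ⟨_, h⟩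

lemma aux_deg_pos {V : Type*} [Fintype V] {G : SimpleGraph V} [DecidableRel G.Adj]
    (hG : G.Connected) (h : 1 < Fintype.card V) (v : V) : 1 ≤ G.degree v := by
  rw [Nat.one_le_iff_ne_zero, ← Nat.pos_iff_ne_zero, G.degree_pos_iff_exists_adj]
  exact aux_exists_adj hG h v

lemma aux_three_le (d : ℕ) : 3 * d ≤ d ^ 2 + 2 := by
  rcases Nat.lt_or_ge d 3 with h | h
  · interval_cases d <;> norm_num
  · nlinarith

lemma aux_path_edges (k : ℕ) (hk : 2 ≤ k) :
    ((SimpleGraph.pathGraph k).edgeFinset).card ≤ k - 1 := by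
  have := Finset.card_le_card_of_injOn
    (f := fun e => Sym2.lift ⟨fun (a b : Fin k) => min a.val b.val,
      fun a b => min_comm _ _⟩ e)
    (s := (SimpleGraph.pathGraph k).edgeFinset) (t := Finset.range (k - 1)) ?_ ?_
  · simpa using this
  · intro e he
    induction e using Sym2.ind with
    | _ u v =>
      rw [Finset.mem_coe, SimpleGraph.mem_edgeFinset, SimpleGraph.mem_edgeSet, pathGraph_adj] at he
      simp only [Finset.mem_coe, Sym2.lift_mk, Finset.mem_range]
      have hu := u.isLt
      have hv := v.isLt
      omega
  · intro e1 h1 e2 h2 heq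
    induction e1 using Sym2.ind with
    | _ u1 v1 =>
      induction e2 using Sym2.ind with
      | _ u2 v2 =>
        simp only [Finset.mem_coe, SimpleGraph.mem_edgeFinset, SimpleGraph.mem_edgeSet,
          pathGraph_adj] at h1 h2
        simp only [Sym2.lift_mk] at heq
        rw [Sym2.eq_iff]
        have : (u1.val = u2.val ∧ v1.val = v2.val) ∨ (u1.val = v2.val ∧ v1.val = u2.val) := by
          omega
        rcases this with ⟨ha, hb⟩ | ⟨ha, hb⟩
        · exact Or.inl ⟨Fin.ext ha, Fin.ext hb⟩
        · exact Or.inr ⟨Fin.ext ha, Fin.ext hb⟩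

/-- Among all trees on `k ≥ 2` vertices, the star `K_{1,k-1}` maximizes and
the path `P_k` minimizes the number of walks of length two, i.e. the sum of the squares of the
vertex degrees. -/
theorem stmt4 (k : ℕ) (hk : 2 ≤ k) (T : SimpleGraph (Fin k)) (hT : T.IsTree) :
    (∑ v : Fin k, ((SimpleGraph.pathGraph k).degree v) ^ 2 ≤ ∑ v : Fin k, (T.degree v) ^ 2) ∧
    (∑ v : Fin k, (T.degree v) ^ 2 ≤
      ∑ w : Fin 1 ⊕ Fin (k - 1), ((completeBipartiteGraph (Fin 1) (Fin (k - 1))).degree w) ^ 2) := by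
  have hcard : 1 < Fintype.card (Fin k) := by simp; omega
  have hTsum : ∑ v : Fin k, T.degree v = 2 * (k - 1) := by
    rw [SimpleGraph.sum_degrees_eq_twice_card_edges]
    have := hT.card_edgeFinset
    simp only [Fintype.card_fin] at this
    omega
  have hTpos : ∀ v : Fin k, 1 ≤ T.degree v := aux_deg_pos hT.isConnected hcard
  constructor
  · -- path ≤ tree
    have hPk : k = (k - 1) + 1 := by omega
    have hPconn : (pathGraph k).Connected := by
      rw [hPk]; exact pathGraph_connected _
    have hPpos : ∀ v : Fin k, 1 ≤ (pathGraph k).degree v := aux_deg_pos hPconn hcard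
    have hPle : ∀ v : Fin k, (pathGraph k).degree v ≤ 2 := by
      intro v
      rw [SimpleGraph.degree]
      have hsub : ((pathGraph k).neighborFinset v).image Fin.val
          ⊆ {v.val + 1, v.val - 1} := by
        intro x hx
        simp only [Finset.mem_image, SimpleGraph.mem_neighborFinset, pathGraph_adj] at hx
        obtain ⟨w, hw, rfl⟩ := hx
        simp only [Finset.mem_insert, Finset.mem_singleton]
        omega
      calc ((pathGraph k).neighborFinset v).card
          = (((pathGraph k).neighborFinset v).image Fin.val).card := by
            rw [Finset.card_image_of_injective _ Fin.val_injective]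
        _ ≤ ({v.val + 1, v.val - 1} : Finset ℕ).card := Finset.card_le_card hsub
        _ ≤ 2 := (Finset.card_insert_le _ _).trans (by simp)
    have hPsum : ∑ v : Fin k, (pathGraph k).degree v ≤ 2 * (k - 1) := by
      rw [SimpleGraph.sum_degrees_eq_twice_card_edges]
      exact Nat.mul_le_mul_left 2 (aux_path_edges k hk)
    have h1 : ∑ v : Fin k, ((pathGraph k).degree v) ^ 2 + 2 * k
        ≤ 3 * ∑ v : Fin k, (pathGraph k).degree v := by
      rw [Finset.mul_sum]
      calc ∑ v : Fin k, ((pathGraph k).degree v) ^ 2 + 2 * k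
          = ∑ v : Fin k, (((pathGraph k).degree v) ^ 2 + 2) := by
            rw [Finset.sum_add_distrib]; simp [mul_comm]
        _ ≤ ∑ v : Fin k, 3 * (pathGraph k).degree v := by
            apply Finset.sum_le_sum
            intro v _
            have ha := hPpos v
            have hb := hPle v
            have : (pathGraph k).degree v = 1 ∨ (pathGraph k).degree v = 2 := by omega
            rcases this with h | h <;> rw [h] <;> norm_num
    have h2 : 3 * ∑ v : Fin k, T.degree v ≤ ∑ v : Fin k, (T.degree v) ^ 2 + 2 * k := by
      rw [Finset.mul_sum]
      calc ∑ v : Fin k, 3 * T.degree v ≤ ∑ v : Fin k, ((T.degree v) ^ 2 + 2) :=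
            Finset.sum_le_sum fun v _ => aux_three_le _
        _ = ∑ v : Fin k, (T.degree v) ^ 2 + 2 * k := by
            rw [Finset.sum_add_distrib]; simp [mul_comm]
    rw [hTsum] at h2
    have h3 : 3 * ∑ v : Fin k, (pathGraph k).degree v ≤ 3 * (2 * (k - 1)) :=
      Nat.mul_le_mul_left 3 hPsum
    omega
  · -- tree ≤ star
    have hdle : ∀ v : Fin k, T.degree v ≤ k - 1 := by
      intro v
      have := T.degree_lt_card_verts v
      simp only [Fintype.card_fin] at this
      omega
    have hsub : ∑ v : Fin k, (T.degree v - 1) = k - 2 := by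
      have h : ∑ v : Fin k, (T.degree v - 1) + ∑ v : Fin k, 1 = ∑ v : Fin k, T.degree v := by
        rw [← Finset.sum_add_distrib]
        exact Finset.sum_congr rfl fun v _ => by have := hTpos v; omega
      simp only [Finset.sum_const, Finset.card_univ, Fintype.card_fin, smul_eq_mul,
        mul_one] at h
      omega
    have hup : ∑ v : Fin k, (T.degree v) ^ 2 ≤ 2 * (k - 1) + (k - 1) * (k - 2) := by
      calc ∑ v : Fin k, (T.degree v) ^ 2
          ≤ ∑ v : Fin k, (T.degree v + (k - 1) * (T.degree v - 1)) := by
            apply Finset.sum_le_sum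
            intro v _
            have ha := hTpos v
            have hb := hdle v
            obtain ⟨m, hm⟩ := Nat.exists_eq_add_of_le ha
            have hkey : T.degree v ^ 2 = T.degree v + T.degree v * (T.degree v - 1) := by
              rw [hm]
              have : 1 + m - 1 = m := by omega
              rw [this]; ring
            rw [hkey]
            exact Nat.add_le_add_left (Nat.mul_le_mul_right _ hb) _
        _ = 2 * (k - 1) + (k - 1) * (k - 2) := by
            rw [Finset.sum_add_distrib, hTsum, ← Finset.mul_sum, hsub]
    have hstar : ∑ w : Fin 1 ⊕ Fin (k - 1),
        ((completeBipartiteGraph (Fin 1) (Fin (k - 1))).degree w) ^ 2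
        = (k - 1) ^ 2 + (k - 1) := by
      rw [Fintype.sum_sum_type]
      have hl : ∀ a : Fin 1, (completeBipartiteGraph (Fin 1) (Fin (k - 1))).degree (.inl a)
          = k - 1 := by
        intro a
        rw [SimpleGraph.degree]
        have : (completeBipartiteGraph (Fin 1) (Fin (k - 1))).neighborFinset (.inl a)
            = Finset.univ.map ⟨Sum.inr, Sum.inr_injective⟩ := by
          ext x; cases x <;> simp
        rw [this]; simp
      have hr : ∀ b : Fin (k - 1),
          (completeBipartiteGraph (Fin 1) (Fin (k - 1))).degree (.inr b) = 1 := by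
        intro b
        rw [SimpleGraph.degree]
        have : (completeBipartiteGraph (Fin 1) (Fin (k - 1))).neighborFinset (.inr b)
            = Finset.univ.map ⟨Sum.inl, Sum.inl_injective⟩ := by
          ext x; cases x <;> simp <;> exact Subsingleton.elim _ _
        rw [this]; simp
      simp [hl, hr]
    rw [hstar]
    refine hup.trans ?_
    obtain ⟨m, hm⟩ := Nat.exists_eq_add_of_le hk
    subst hm
    have e1 : 2 + m - 1 = 1 + m := by omega
    have e2 : 2 + m - 2 = m := by omega
    rw [e1, e2]; ring_nf; omega
end

section
/- Let r ≥ 3 and define c₁(r) = (1/r)·(1 - [ (r-1)/2 · (2 + 5/(r-1) - 4/r + √((2 + 5/(r-1) - 4/r)² - (4/(r-1))·(6/(r-1) - 4/r))) ]⁻¹). If Q < c₁(r) and k is a positive integer with 1 ≤ k ≤ 1/(1-Qr), then 2 - (k - 5 + 6/k)/(r-1) - 4(k-1)/(kr) > 0. -/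
set_option maxHeartbeats 1000000


/-- Let `r ≥ 3` and define
`c₁(r) = (1/r)(1 - [ (r-1)/2 (2 + 5/(r-1) - 4/r + √((2 + 5/(r-1) - 4/r)² -
(4/(r-1))(6/(r-1) - 4/r))) ]⁻¹)`.  If `0 ≤ Q < c₁(r)` and `k` is a positive integer with
`1 ≤ k ≤ 1/(1 - Qr)`, then `2 - (k - 5 + 6/k)/(r-1) - 4(k-1)/(kr) > 0`. -/
theorem stmt6 (r : ℕ) (hr : 3 ≤ r) (Q : ℝ) (hQ0 : 0 ≤ Q)
    (hQ : Q < 1 / (r : ℝ) * (1 - (((r : ℝ) - 1) / 2 * (2 + 5 / ((r : ℝ) - 1) - 4 / (r : ℝ) +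
      Real.sqrt ((2 + 5 / ((r : ℝ) - 1) - 4 / (r : ℝ)) ^ 2 -
        4 / ((r : ℝ) - 1) * (6 / ((r : ℝ) - 1) - 4 / (r : ℝ)))))⁻¹))
    (k : ℕ) (hk1 : 1 ≤ k) (hk2 : (k : ℝ) ≤ 1 / (1 - Q * r)) :
    2 - ((k : ℝ) - 5 + 6 / (k : ℝ)) / ((r : ℝ) - 1) - 4 * ((k : ℝ) - 1) / ((k : ℝ) * r) > 0 := by
  have hR : (3:ℝ) ≤ (r:ℝ) := by exact_mod_cast hr
  have hRm : (0:ℝ) < (r:ℝ) - 1 := by linarith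
  have hRpos : (0:ℝ) < (r:ℝ) := by linarith
  have hk0 : (0:ℝ) < (k:ℝ) := by exact_mod_cast hk1
  have hk1' : (1:ℝ) ≤ (k:ℝ) := by exact_mod_cast hk1
  set R := (r:ℝ) with hRdef
  set B : ℝ := 2 + 5/(R-1) - 4/R with hBdef
  set C : ℝ := 6/(R-1) - 4/R with hCdef
  have hRne : R ≠ 0 := ne_of_gt hRpos
  have hRmne : R - 1 ≠ 0 := ne_of_gt hRm
  -- discriminant is positive
  have hDpos : 0 < B^2 - 4/(R-1)*C := by
    rw [hBdef, hCdef]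
    have h1 : (2 + 5/(R-1) - 4/R)^2 - 4/(R-1)*(6/(R-1) - 4/R)
        = (2 - 4/R)^2 + (1/(R-1))^2 + (1/(R-1))*(6*(2 - 4/R) + 8) := by ring
    rw [h1]
    have hu : 0 < 1/(R-1) := by positivity
    have hv2 : 4/R ≤ 2 := by rw [div_le_iff₀ hRpos]; linarith
    have t1 : (0:ℝ) ≤ (2 - 4/R)^2 := sq_nonneg _
    have t2 : (0:ℝ) < (1/(R-1))^2 := by positivity
    have t3 : (0:ℝ) ≤ (1/(R-1))*(6*(2 - 4/R) + 8) := mul_nonneg hu.le (by linarith)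
    linarith
  set s : ℝ := Real.sqrt (B^2 - 4/(R-1)*C) with hsdef
  have hs0 : 0 ≤ s := Real.sqrt_nonneg _
  have hs2 : s^2 = B^2 - 4/(R-1)*C := Real.sq_sqrt hDpos.le
  have hBpos : 0 < B := by
    rw [hBdef]
    have h4 : 4/R ≤ 2 := by rw [div_le_iff₀ hRpos]; linarith
    have h5 : 0 < 5/(R-1) := by positivity
    linarith
  set x : ℝ := (R-1)/2 * (B + s) with hxdef
  set y : ℝ := (R-1)/2 * (B - s) with hydef
  have hxpos : 0 < x := by
    rw [hxdef]; apply mul_pos (by positivity); linarith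
  -- from hQ : Q < 1/R * (1 - x⁻¹)
  have hQR : Q * R < 1 - x⁻¹ := by
    have h := (mul_lt_mul_of_pos_right hQ hRpos)
    have h2 : 1/R * (1 - x⁻¹) * R = 1 - x⁻¹ := by field_simp
    linarith [h2 ▸ h]
  have hxinv : 0 < x⁻¹ := inv_pos.mpr hxpos
  have h1QR : 0 < 1 - Q * R := by linarith
  -- k < x
  have hkx : (k:ℝ) < x := by
    have hx1 : 1 < x * (1 - Q * R) := by
      have h3 := mul_lt_mul_of_pos_left (show x⁻¹ < 1 - Q * R by linarith) hxpos
      rwa [mul_inv_cancel₀ (ne_of_gt hxpos)] at h3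
    have h2 : 1/(1 - Q*R) < x := (div_lt_iff₀ h1QR).mpr hx1
    linarith [hk2]
  -- sum and product of the roots
  have hsum : y + x = (R-1)*B := by rw [hxdef, hydef]; ring
  have hprod : y * x = (R-1)*C := by
    have h1 : y * x = ((R-1)/2)^2 * (B^2 - s^2) := by rw [hxdef, hydef]; ring
    rw [h1, hs2]
    field_simp
    ring
  -- (1 - y)(1 - x) = 4 - 2R < 0
  have hfact1 : (1 - y) * (1 - x) = 1 - (R-1)*B + (R-1)*C := by
    have : (1 - y) * (1 - x) = 1 - (y + x) + y * x := by ring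
    rw [this, hsum, hprod]
  have hfact1' : (1 - y) * (1 - x) = 4 - 2*R := by
    rw [hfact1, hBdef, hCdef]; field_simp; ring
  have h1x : 1 - x < 0 := by linarith
  have hy1 : y < 1 := by nlinarith [hfact1']
  -- the quadratic is negative at k
  have hfk : ((k:ℝ) - y) * ((k:ℝ) - x) < 0 :=
    mul_neg_of_pos_of_neg (by linarith) (by linarith)
  have key : ((k:ℝ) - y) * ((k:ℝ) - x) = (k:ℝ)^2 - (R-1)*B*(k:ℝ) + (R-1)*C := by
    linear_combination (-(k:ℝ)) * hsum + hprod
  have hnum : (k:ℝ)^2 - (R-1)*B*(k:ℝ) + (R-1)*C < 0 := key ▸ hfk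
  have hrw : 2 - ((k : ℝ) - 5 + 6 / (k : ℝ)) / (R - 1) - 4 * ((k : ℝ) - 1) / ((k : ℝ) * R)
      = -((k:ℝ)^2 - (R-1)*B*(k:ℝ) + (R-1)*C) / ((R-1) * (k:ℝ)) := by
    rw [hBdef, hCdef]
    field_simp
    ring
  rw [hrw]
  apply div_pos (by linarith) (by positivity)
end

section
/- Let p ≥ 2 and let G be obtained by embedding a disjoint union of paths P_3 covering p-1 vertices (with p ≡ 1 mod 3, so (p-1)/3 paths) into the part of size p-1 of the complete bipartite graph K_{p-1,p+1}. Then G has an equitable partition with quotient matrix B = [[0,2,p+1],[1,0,p+1],[(p-1)/3, 2(p-1)/3, 0]], and λ(G) equals the largest eigenvalue of B. -/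
open SimpleGraph
open scoped Classical

/-- The graph obtained by embedding a disjoint union of paths `P₃` covering the `p - 1`
vertices of the small part of the complete bipartite graph `K_{p-1,p+1}` (the blocks of three
consecutive vertices `3b, 3b+1, 3b+2` of `Fin (p-1)` carry the paths, with `3b+1` the
center). -/
def pathPackBip (p : ℕ) : SimpleGraph (Fin (p - 1) ⊕ Fin (p + 1)) where
  Adj x y := match x, y with
    | Sum.inl i, Sum.inl j =>
        (i : ℕ) / 3 = (j : ℕ) / 3 ∧ ((i : ℕ) = (j : ℕ) + 1 ∨ (j : ℕ) = (i : ℕ) + 1)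
    | Sum.inr _, Sum.inr _ => False
    | Sum.inl _, Sum.inr _ => True
    | Sum.inr _, Sum.inl _ => True
  symm := by
    constructor
    rintro (i | i) (j | j) h
    · exact ⟨h.1.symm, h.2.symm⟩
    · trivial
    · trivial
    · exact h
  loopless := by
    constructor
    rintro (i | i) h
    · have := h.2; omega
    · exact h
  
/-- The three cells of the equitable partition: cell `0` consists of the centers of the
embedded `P₃`'s, cell `1` of their endpoints, and cell `2` of the part of size `p + 1`. -/
def cell16 (p : ℕ) : Fin (p - 1) ⊕ Fin (p + 1) → Fin 3 :=
  fun x => match x with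
    | Sum.inl i => if (i : ℕ) % 3 = 1 then 0 else 1
    | Sum.inr _ => 2

/-!
The centres, the endpoints of the paths and the large part form an equitable partition, so every
eigenvector `v` of the quotient matrix `B` lifts to the eigenvector `v ∘ cell16 p` of the
adjacency matrix `A`; in particular `spectrum B ⊆ spectrum A`. With `Q = p + 1` and
`C = (p - 1) / 3`, the characteristic polynomial of `B` is `μ³ - (2 + 3QC)μ - 4QC`; for its
root `μ > √2` the vector `(Q(μ + 2), Q(μ + 1), μ² - 2)` is a positive eigenvector of `B`.
Its lift `w` is a positive eigenvector of the nonnegative symmetric matrix `A`, and for any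
eigenpair `A u = ν u` we get `|ν| ⟪w, |u|⟫ ≤ ⟪w, A |u|⟫ = μ ⟪w, |u|⟫`. Hence `μ` is the largest
eigenvalue of both `A` and `B`.
-/

open Finset Matrix

theorem Matrix.mem_spectrum_iff_exists_mulVec_eq_smul {n : Type*} [Fintype n] [DecidableEq n]
    {A : Matrix n n ℝ} {μ : ℝ} : μ ∈ spectrum ℝ A ↔ ∃ v ≠ 0, A *ᵥ v = μ • v := by
  simp only [← Matrix.spectrum_toLin', ← Module.End.hasEigenvalue_iff_mem_spectrum,
    Module.End.hasEigenvalue_iff, Submodule.ne_bot_iff, Module.End.mem_eigenspace_iff,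
    Matrix.toLin'_apply]
  exact exists_congr fun _ => and_comm

theorem Matrix.abs_le_of_mem_spectrum_of_vecMul_eq_smul {n : Type*} [Fintype n] [DecidableEq n]
    {A : Matrix n n ℝ} (hA : ∀ i j, 0 ≤ A i j) {w : n → ℝ} (hw : ∀ i, 0 < w i) {μ : ℝ}
    (hwA : w ᵥ* A = μ • w) {ν : ℝ} (hν : ν ∈ spectrum ℝ A) : |ν| ≤ μ := by
  obtain ⟨u, hu0, hu⟩ := Matrix.mem_spectrum_iff_exists_mulVec_eq_smul.1 hν
  have hwu : 0 < w ⬝ᵥ |u| := by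
    obtain ⟨i, hi⟩ := Function.ne_iff.1 hu0
    exact Finset.sum_pos' (fun j _ => mul_nonneg (hw j).le (abs_nonneg _))
      ⟨i, mem_univ _, mul_pos (hw i) (abs_pos.2 hi)⟩
  have hle : |ν| • |u| ≤ A *ᵥ |u| := fun i => by
    calc |ν| * |u i| = |(A *ᵥ u) i| := by rw [hu, Pi.smul_apply, smul_eq_mul, abs_mul]
      _ ≤ ∑ j, |A i j * u j| := abs_sum_le_sum_abs _ _
      _ = (A *ᵥ |u|) i := by simp only [abs_mul, abs_of_nonneg (hA i _)]; rfl
  refine le_of_mul_le_mul_right ?_ hwu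
  calc |ν| * (w ⬝ᵥ |u|) = w ⬝ᵥ (|ν| • |u|) := by rw [dotProduct_smul, smul_eq_mul]
    _ ≤ w ⬝ᵥ (A *ᵥ |u|) := dotProduct_le_dotProduct_of_nonneg_left hle fun i => (hw i).le
    _ = μ * (w ⬝ᵥ |u|) := by rw [dotProduct_mulVec, hwA, smul_dotProduct, smul_eq_mul]

theorem Matrix.IsSymm.isGreatest_spectrum {n : Type*} [Fintype n] [DecidableEq n] [Nonempty n]
    {A : Matrix n n ℝ} (hsymm : A.IsSymm) (hA : ∀ i j, 0 ≤ A i j) {w : n → ℝ}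
    (hw : ∀ i, 0 < w i) {μ : ℝ} (hAw : A *ᵥ w = μ • w) : IsGreatest (spectrum ℝ A) μ := by
  have hwA : w ᵥ* A = μ • w := by rw [← mulVec_transpose, hsymm.eq, hAw]
  refine ⟨Matrix.mem_spectrum_iff_exists_mulVec_eq_smul.2 ⟨w, ?_, hAw⟩, fun ν hν =>
    (le_abs_self ν).trans (abs_le_of_mem_spectrum_of_vecMul_eq_smul hA hw hwA hν)⟩
  exact Function.ne_iff.2 ⟨Classical.arbitrary n, (hw _).ne'⟩

namespace SimpleGraph

variable {V ι : Type*} (G : SimpleGraph V)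

/-- The fibres of `π` form an equitable partition of `G` with quotient matrix `B`. -/
def IsEquitablePartition (π : V → ι) (B : Matrix ι ι ℝ) : Prop :=
  ∀ x j, (Nat.card {y // G.Adj x y ∧ π y = j} : ℝ) = B (π x) j

variable {G} [Fintype V] [DecidableRel G.Adj] [Fintype ι] [DecidableEq ι] {π : V → ι}
  {B : Matrix ι ι ℝ}

theorem IsEquitablePartition.adjMatrix_mulVec_comp (h : G.IsEquitablePartition π B)
    (v : ι → ℝ) : G.adjMatrix ℝ *ᵥ (v ∘ π) = (B *ᵥ v) ∘ π := by
  funext x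
  have hcard : ∀ j, (#{y ∈ G.neighborFinset x | π y = j} : ℝ) = B (π x) j := fun j => by
    rw [← h x j, Nat.card_eq_fintype_card, Fintype.card_subtype]
    congr 2
    ext y
    simp
  calc (G.adjMatrix ℝ *ᵥ (v ∘ π)) x = ∑ y ∈ G.neighborFinset x, v (π y) :=
        adjMatrix_mulVec_apply ..
    _ = ∑ j, ∑ y ∈ G.neighborFinset x with π y = j, v j := (sum_fiberwise' ..).symm
    _ = ∑ j, B (π x) j * v j := by simp only [sum_const, nsmul_eq_mul, hcard]
    _ = ((B *ᵥ v) ∘ π) x := rfl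

theorem IsEquitablePartition.spectrum_subset [DecidableEq V] (h : G.IsEquitablePartition π B)
    (hπ : Function.Surjective π) : spectrum ℝ B ⊆ spectrum ℝ (G.adjMatrix ℝ) := fun ν hν => by
  obtain ⟨v, hv0, hv⟩ := Matrix.mem_spectrum_iff_exists_mulVec_eq_smul.1 hν
  refine Matrix.mem_spectrum_iff_exists_mulVec_eq_smul.2 ⟨v ∘ π, ?_, ?_⟩
  · exact fun h0 => hv0 (hπ.injective_comp_right h0)
  · rw [h.adjMatrix_mulVec_comp, hv]
    rfl

theorem IsEquitablePartition.sSup_spectrum_adjMatrix_eq [DecidableEq V] [Nonempty V]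
    (h : G.IsEquitablePartition π B) (hπ : Function.Surjective π) {v : ι → ℝ}
    (hv : ∀ j, 0 < v j) {μ : ℝ} (hBv : B *ᵥ v = μ • v) :
    sSup (spectrum ℝ (G.adjMatrix ℝ)) = sSup (spectrum ℝ B) := by
  have hA : IsGreatest (spectrum ℝ (G.adjMatrix ℝ)) μ := by
    refine (isSymm_adjMatrix G).isGreatest_spectrum (fun x y => ?_)
      (w := v ∘ π) (fun x => hv (π x)) ?_
    · rw [adjMatrix_apply]
      exact ite_nonneg zero_le_one le_rfl
    · rw [h.adjMatrix_mulVec_comp, hBv]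
      rfl
  have hμB : μ ∈ spectrum ℝ B := by
    refine Matrix.mem_spectrum_iff_exists_mulVec_eq_smul.2 ⟨v, fun h0 => ?_, hBv⟩
    obtain ⟨x⟩ := ‹Nonempty V›
    exact (hv (π x)).ne' (congrFun h0 (π x))
  have hsub := h.spectrum_subset hπ
  rw [hA.csSup_eq, IsGreatest.csSup_eq ⟨hμB, fun ν hν => hA.2 (hsub hν)⟩]

end SimpleGraph

/-- `μ³ - (2 + 3K)μ - 4K` is the characteristic polynomial of the quotient matrix below,
with `K = QC`. -/
theorem exists_cubic_root_gt_sqrt_two {K : ℝ} (hK : 0 < K) :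
    ∃ μ, √2 < μ ∧ μ ^ 3 = (2 + 3 * K) * μ + 4 * K := by
  set f : ℝ → ℝ := fun t => t ^ 3 - (2 + 3 * K) * t - 4 * K
  have hs : √2 ^ 2 = 2 := Real.sq_sqrt zero_le_two
  have hs0 : 0 ≤ √2 := Real.sqrt_nonneg 2
  have hle : √2 ≤ 2 + 2 * K := by nlinarith
  have hlo : f √2 < 0 := by simp only [f]; nlinarith
  have hhi : 0 < f (2 + 2 * K) := by simp only [f]; nlinarith [pow_pos hK 3]
  obtain ⟨μ, hμ, hfμ⟩ := intermediate_value_Ioo hle (by fun_prop : Continuous f).continuousOn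
    ⟨hlo, hhi⟩
  exact ⟨μ, hμ.1, by simp only [f] at hfμ; linarith⟩

theorem exists_pos_eigenvector_pathPackQuotient {Q C : ℝ} (hQ : 0 < Q) (hC : 0 < C) :
    ∃ μ : ℝ, ∃ v : Fin 3 → ℝ, (∀ j, 0 < v j) ∧
      !![0, 2, Q; 1, 0, Q; C, 2 * C, 0] *ᵥ v = μ • v := by
  obtain ⟨μ, hμ, hroot⟩ := exists_cubic_root_gt_sqrt_two (mul_pos hQ hC)
  have hμ0 : 0 < μ := (Real.sqrt_nonneg 2).trans_lt hμ
  have hμ2 : 2 < μ ^ 2 := by simpa using pow_lt_pow_left₀ hμ (Real.sqrt_nonneg 2) two_ne_zero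
  refine ⟨μ, ![Q * (μ + 2), Q * (μ + 1), μ ^ 2 - 2], fun j => ?_, ?_⟩
  · fin_cases j <;>
      simp only [Fin.zero_eta, Fin.mk_one, Fin.reduceFinMk, cons_val_zero, cons_val_one,
        Matrix.cons_val] <;> nlinarith
  · ext j
    fin_cases j <;>
      simp only [mulVec, dotProduct, Fin.sum_univ_three, of_apply, cons_val', cons_val_fin_one,
        Fin.zero_eta, Fin.mk_one, Fin.reduceFinMk, cons_val_zero, cons_val_one, Matrix.cons_val,
        Pi.smul_apply, smul_eq_mul]
    · ring
    · ring
    · linear_combination -hroot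

theorem Nat.card_subtype_sum {α β : Type*} (P : α ⊕ β → Prop) [Finite α] [Finite β] :
    Nat.card {y // P y} = Nat.card {a // P (.inl a)} + Nat.card {b // P (.inr b)} := by
  rw [Nat.card_congr Equiv.subtypeSum, Nat.card_sum]

theorem Fin.card_subtype_val_eq_count (Q : ℕ → Prop) [DecidablePred Q] (n : ℕ) :
    Fintype.card {k : Fin n // Q k} = Nat.count Q n := by
  rw [Fintype.card_subtype, card_filter, Nat.count_eq_card_filter_range, card_filter,
    Fin.sum_univ_eq_sum_range (fun k => if Q k then 1 else 0)]

def pathForestAdj (i k : ℕ) : Prop := i / 3 = k / 3 ∧ (i = k + 1 ∨ k = i + 1)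

section PathForest

variable {n : ℕ}

theorem Fin.card_val_mod_three_eq_one (hn : n % 3 = 0) :
    Fintype.card {k : Fin n // (k : ℕ) % 3 = 1} = n / 3 := by
  have := Nat.count_modEq_card (r := 3) n (by norm_num) 1
  simp only [hn] at this
  rw [Fin.card_subtype_val_eq_count (· % 3 = 1)]
  exact this

theorem card_pathForestAdj_mod_three_eq_one (hn : n % 3 = 0) (i : Fin n) :
    Fintype.card {k : Fin n // pathForestAdj i k ∧ (k : ℕ) % 3 = 1} =
      if (i : ℕ) % 3 = 1 then 0 else 1 := by
  have hi := i.isLt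
  rw [Fin.card_subtype_val_eq_count (fun k => pathForestAdj i k ∧ k % 3 = 1),
    Nat.count_eq_card_filter_range]
  split_ifs with h
  · refine card_eq_zero.2 (filter_eq_empty_iff.2 fun k _ => ?_)
    unfold pathForestAdj
    omega
  · refine card_eq_one.2 ⟨3 * (i / 3) + 1, ?_⟩
    ext k
    simp only [mem_filter, mem_range, mem_singleton]
    unfold pathForestAdj
    omega

theorem card_pathForestAdj_mod_three_ne_one (hn : n % 3 = 0) (i : Fin n) :
    Fintype.card {k : Fin n // pathForestAdj i k ∧ ¬ (k : ℕ) % 3 = 1} =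
      if (i : ℕ) % 3 = 1 then 2 else 0 := by
  have hi := i.isLt
  rw [Fin.card_subtype_val_eq_count (fun k => pathForestAdj i k ∧ ¬ k % 3 = 1),
    Nat.count_eq_card_filter_range]
  split_ifs with h
  · refine card_eq_two.2 ⟨i - 1, i + 1, by omega, ?_⟩
    ext k
    simp only [mem_filter, mem_range, mem_insert, mem_singleton]
    unfold pathForestAdj
    omega
  · refine card_eq_zero.2 (filter_eq_empty_iff.2 fun k _ => ?_)
    unfold pathForestAdj
    omega

end PathForest

section PathPackBip

variable {p : ℕ}

@[simp] theorem pathPackBip_adj_inl_inl {i k : Fin (p - 1)} :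
    (pathPackBip p).Adj (.inl i) (.inl k) ↔ pathForestAdj i k := Iff.rfl

@[simp] theorem pathPackBip_adj_inl_inr {i : Fin (p - 1)} {b : Fin (p + 1)} :
    (pathPackBip p).Adj (.inl i) (.inr b) := trivial

@[simp] theorem pathPackBip_adj_inr_inl {i : Fin (p - 1)} {b : Fin (p + 1)} :
    (pathPackBip p).Adj (.inr b) (.inl i) := trivial

@[simp] theorem pathPackBip_not_adj_inr_inr {a b : Fin (p + 1)} :
    ¬ (pathPackBip p).Adj (.inr a) (.inr b) := id

theorem cell16_inl (i : Fin (p - 1)) :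
    cell16 p (.inl i) = if (i : ℕ) % 3 = 1 then 0 else 1 :=
  rfl

@[simp] theorem cell16_inl_eq_zero_iff {i : Fin (p - 1)} :
    cell16 p (.inl i) = 0 ↔ (i : ℕ) % 3 = 1 := by
  simp [cell16_inl]

@[simp] theorem cell16_inl_eq_one_iff {i : Fin (p - 1)} :
    cell16 p (.inl i) = 1 ↔ ¬ (i : ℕ) % 3 = 1 := by
  simp [cell16_inl]

@[simp] theorem cell16_inl_ne_two {i : Fin (p - 1)} : cell16 p (.inl i) ≠ 2 := by
  rw [cell16_inl]
  split_ifs <;> decide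

@[simp] theorem cell16_inr (b : Fin (p + 1)) : cell16 p (.inr b) = 2 := rfl

theorem cell16_surjective (hp : 3 ≤ p) : Function.Surjective (cell16 p) := by
  intro j
  fin_cases j
  · exact ⟨.inl ⟨1, by omega⟩, by simp⟩
  · exact ⟨.inl ⟨0, by omega⟩, by simp⟩
  · exact ⟨.inr 0, rfl⟩

theorem pathPackBip_isEquitablePartition (hp3 : p % 3 = 1) :
    (pathPackBip p).IsEquitablePartition (cell16 p)
      !![0, 2, (p : ℝ) + 1; 1, 0, (p : ℝ) + 1; ((p : ℝ) - 1) / 3, 2 * ((p : ℝ) - 1) / 3, 0] := by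
  have hn : (p - 1) % 3 = 0 := by omega
  obtain ⟨c, hc⟩ : ∃ c, p = 3 * c + 1 := ⟨p / 3, by omega⟩
  have hpc : (p : ℝ) = 3 * c + 1 := by exact_mod_cast hc
  have hc₁ : (p - 1) / 3 = c := by omega
  have hc₂ : p - 1 - c = 2 * c := by omega
  rintro (i | b) j <;> rw [Nat.card_subtype_sum]
  · rw [cell16_inl]
    by_cases hi : (i : ℕ) % 3 = 1 <;> fin_cases j <;>
      simp [hi, card_pathForestAdj_mod_three_eq_one hn, card_pathForestAdj_mod_three_ne_one hn]
  · fin_cases j <;> simp [Fin.card_val_mod_three_eq_one hn, hc₁, hc₂, hpc, mul_div_assoc]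

end PathPackBip

/-- Let `p ≥ 2` with `p ≡ 1 (mod 3)`, and let `G` be obtained by embedding
`(p-1)/3` disjoint paths `P₃` covering the part of size `p - 1` of the complete bipartite
graph `K_{p-1,p+1}`.  Then `G` has an equitable partition (centers, endpoints, large part)
with quotient matrix `B = [[0,2,p+1],[1,0,p+1],[(p-1)/3, 2(p-1)/3, 0]]`, and the spectral
radius `λ(G)` equals the largest eigenvalue of `B`. -/
theorem stmt16 (p : ℕ) (hp : 2 ≤ p) (hp3 : p % 3 = 1) :
    (∀ x : Fin (p - 1) ⊕ Fin (p + 1), ∀ j : Fin 3,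
      (Nat.card {y // (pathPackBip p).Adj x y ∧ cell16 p y = j} : ℝ) =
        !![0, 2, (p : ℝ) + 1; 1, 0, (p : ℝ) + 1;
           ((p : ℝ) - 1) / 3, 2 * ((p : ℝ) - 1) / 3, 0] (cell16 p x) j) ∧
    sSup (spectrum ℝ ((pathPackBip p).adjMatrix ℝ)) =
      sSup (spectrum ℝ (!![0, 2, (p : ℝ) + 1; 1, 0, (p : ℝ) + 1;
           ((p : ℝ) - 1) / 3, 2 * ((p : ℝ) - 1) / 3, 0])) := by
  have hB := pathPackBip_isEquitablePartition hp3
  have hp4 : (4 : ℝ) ≤ p := by exact_mod_cast (by omega : 4 ≤ p)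
  obtain ⟨μ, v, hv, hBv⟩ := exists_pos_eigenvector_pathPackQuotient
    (Q := (p : ℝ) + 1) (C := ((p : ℝ) - 1) / 3) (by positivity) (by linarith)
  rw [← mul_div_assoc] at hBv
  exact ⟨hB, hB.sSup_spectrum_adjMatrix_eq (cell16_surjective (by omega)) hv hBv⟩
end
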